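/- Let θ ∈ (0,1) and α ∈ (1,2]. Then for all U, V ∈ ℝ^{m×n}, ‖(1−θ)(U + V)‖_F^α ≤ (1−θ)‖U‖_F^α + 3θ^{1−α}‖V‖_F^α. -/

import Mathlib

open Matrix Kronecker

/-- Spectral norm: ℓ²→ℓ² operator norm of a real matrix. -/
noncomputable def specNorm {ι κ : Type*} [Fintype ι] [Fintype κ] [DecidableEq κ]
    (A : Matrix ι κ ℝ) : ℝ :=
  ‖LinearMap.toContinuousLinearMap (Matrix.toEuclideanLin A)‖

/-- The positive semidefinite square root of a positive semidefinite matrix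
(the definition of `Matrix.PosSemidef.sqrt` in the older Mathlib). -/
noncomputable def Matrix.PosSemidef.sqrt {n 𝕜 : Type*} [Fintype n] [DecidableEq n] [RCLike 𝕜]
    [PartialOrder 𝕜] [StarOrderedRing 𝕜] {A : Matrix n n 𝕜} (hA : A.PosSemidef) : Matrix n n 𝕜 :=
  hA.1.eigenvectorUnitary.1 * diagonal ((↑) ∘ (Real.sqrt ∘ hA.1.eigenvalues)) *
  (star hA.1.eigenvectorUnitary : Matrix n n 𝕜)

/-- Nuclear norm: trace of the positive semidefinite square root of `Aᵀ * A`. -/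
noncomputable def nucNorm {ι κ : Type*} [Fintype ι] [Fintype κ] [DecidableEq κ]
    (A : Matrix ι κ ℝ) : ℝ :=
  Matrix.trace (Matrix.posSemidef_conjTranspose_mul_self A).sqrt

/-- Frobenius norm. -/
noncomputable def frobNorm {ι κ : Type*} [Fintype ι] [Fintype κ] (A : Matrix ι κ ℝ) : ℝ :=
  Real.sqrt (∑ i, ∑ j, (A i j) ^ 2)

/-- Trace inner product `⟨A, B⟩ = trace (Aᵀ B)`. -/
noncomputable def tin {ι κ : Type*} [Fintype ι] [Fintype κ] (A B : Matrix ι κ ℝ) : ℝ :=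
  Matrix.trace (Aᵀ * B)

/-- Vertical stacking of `N` matrices of size `m × n`. -/
def vstack {N m n : ℕ} (Y : Fin N → Matrix (Fin m) (Fin n) ℝ) :
    Matrix (Fin N × Fin m) (Fin n) ℝ :=
  fun p j => Y p.1 p.2 j

/-!
Write `a = ‖U‖`, `b = ‖V‖`. Convexity of `t ↦ t ^ α` at the points `a / (1 - θ)` and `b / θ`
with weights `1 - θ` and `θ` gives `(a + b) ^ α ≤ (1 - θ) ^ (1 - α) a ^ α + θ ^ (1 - α) b ^ α`.
Multiplying by `(1 - θ) ^ α` turns the first coefficient into `1 - θ`, and the second one,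
`(1 - θ) ^ α θ ^ (1 - α)`, is at most `θ ^ (1 - α)`, a fortiori at most `3 θ ^ (1 - α)`.
-/

theorem add_rpow_le_one_sub_rpow_mul_add_rpow_mul {θ α a b : ℝ} (hθ0 : 0 < θ) (hθ1 : θ < 1)
    (hα : 1 ≤ α) (ha : 0 ≤ a) (hb : 0 ≤ b) :
    (a + b) ^ α ≤ (1 - θ) ^ (1 - α) * a ^ α + θ ^ (1 - α) * b ^ α := by
  have hθ1' : 0 < 1 - θ := sub_pos.2 hθ1
  have hconvex := (convexOn_rpow hα).2 (Set.mem_Ici.2 (div_nonneg ha hθ1'.le))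
    (Set.mem_Ici.2 (div_nonneg hb hθ0.le)) hθ1'.le hθ0.le (sub_add_cancel 1 θ)
  have hsum : (1 - θ) • (a / (1 - θ)) + θ • (b / θ) = a + b := by
    simp only [smul_eq_mul]
    field_simp
  rw [hsum] at hconvex
  calc (a + b) ^ α ≤ (1 - θ) * (a / (1 - θ)) ^ α + θ * (b / θ) ^ α := hconvex
    _ = (1 - θ) ^ (1 - α) * a ^ α + θ ^ (1 - α) * b ^ α := by
      rw [Real.div_rpow ha hθ1'.le, Real.div_rpow hb hθ0.le, Real.rpow_sub hθ1',
        Real.rpow_sub hθ0, Real.rpow_one, Real.rpow_one]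
      ring

theorem norm_one_sub_smul_add_rpow_le {E : Type*} [SeminormedAddCommGroup E] [NormedSpace ℝ E]
    {θ α : ℝ} (hθ0 : 0 < θ) (hθ1 : θ < 1) (hα : 1 ≤ α) (x y : E) :
    ‖(1 - θ) • (x + y)‖ ^ α ≤ (1 - θ) * ‖x‖ ^ α + θ ^ (1 - α) * ‖y‖ ^ α := by
  have hθ1' : 0 < 1 - θ := sub_pos.2 hθ1
  have hpow_le_one : (1 - θ) ^ α ≤ 1 := Real.rpow_le_one hθ1'.le (by linarith) (by linarith)
  calc ‖(1 - θ) • (x + y)‖ ^ α = (1 - θ) ^ α * ‖x + y‖ ^ α := by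
        rw [norm_smul, Real.norm_of_nonneg hθ1'.le, Real.mul_rpow hθ1'.le (norm_nonneg _)]
    _ ≤ (1 - θ) ^ α * (‖x‖ + ‖y‖) ^ α := by gcongr; exact norm_add_le x y
    _ ≤ (1 - θ) ^ α * ((1 - θ) ^ (1 - α) * ‖x‖ ^ α + θ ^ (1 - α) * ‖y‖ ^ α) := by
        gcongr
        exact add_rpow_le_one_sub_rpow_mul_add_rpow_mul hθ0 hθ1 hα (norm_nonneg x) (norm_nonneg y)
    _ = (1 - θ) * ‖x‖ ^ α + (1 - θ) ^ α * (θ ^ (1 - α) * ‖y‖ ^ α) := by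
        rw [mul_add, ← mul_assoc, ← Real.rpow_add hθ1', add_sub_cancel, Real.rpow_one]
    _ ≤ (1 - θ) * ‖x‖ ^ α + θ ^ (1 - α) * ‖y‖ ^ α :=
        add_le_add_right (mul_le_of_le_one_left (by positivity) hpow_le_one) _

section Frobenius

open scoped Matrix.Norms.Frobenius

variable {ι κ : Type*} [Fintype ι] [Fintype κ]

theorem frobNorm_eq_norm (A : Matrix ι κ ℝ) : frobNorm A = ‖A‖ := by
  simp [frobNorm, frobenius_norm_def, Real.sqrt_eq_rpow]

theorem frobNorm_one_sub_smul_add_rpow_le {θ α : ℝ} (hθ0 : 0 < θ) (hθ1 : θ < 1) (hα : 1 ≤ α)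
    (U V : Matrix ι κ ℝ) :
    frobNorm ((1 - θ) • (U + V)) ^ α
      ≤ (1 - θ) * frobNorm U ^ α + θ ^ (1 - α) * frobNorm V ^ α := by
  simpa only [frobNorm_eq_norm] using norm_one_sub_smul_add_rpow_le hθ0 hθ1 hα U V

end Frobenius

theorem stmt17_general {m n : ℕ} (θ α : ℝ) (hθ0 : 0 < θ) (hθ1 : θ < 1) (hα1 : 1 < α) :
    ∀ U V : Matrix (Fin m) (Fin n) ℝ,
      frobNorm ((1 - θ) • (U + V)) ^ α
        ≤ (1 - θ) * frobNorm U ^ α + 3 * θ ^ (1 - α) * frobNorm V ^ α := by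
  intro U V
  refine (frobNorm_one_sub_smul_add_rpow_le hθ0 hθ1 hα1.le U V).trans ?_
  gcongr
  · exact Real.rpow_nonneg (Real.sqrt_nonneg _) α
  · exact le_mul_of_one_le_left (by positivity) (by norm_num)

theorem stmt17 {m n : ℕ} (θ α : ℝ) (hθ0 : 0 < θ) (hθ1 : θ < 1) (hα1 : 1 < α) (hα2 : α ≤ 2) :
    ∀ U V : Matrix (Fin m) (Fin n) ℝ,
      frobNorm ((1 - θ) • (U + V)) ^ α
        ≤ (1 - θ) * frobNorm U ^ α + 3 * θ ^ (1 - α) * frobNorm V ^ α :=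
  stmt17_general θ α hθ0 hθ1 hα1
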